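/- Let d ≥ 1, M > 0 and u ∈ ℝ^d with u ≠ 0. Then sup_{ε∈(0,1]} ∫₀¹ p^d_{ε+2Mt}(u) dt < ∞; more precisely, for every ε ∈ (0,1], ∫₀¹ p^d_{ε+2Mt}(u) dt ≤ (2π)^{-d/2} ε^{1−d/2} exp(−‖u‖²/(2(1+2M)ε)) + ((1+2M)/(2M))^{d/2} ∫₀¹ p^d_{(1+2M)t}(u) dt, and the right-hand side is bounded uniformly in ε ∈ (0,1] by a finite constant. -/

import Mathlib

/-!
Split `∫₀¹` at `t = ε`. For `t ≤ ε` the variance `ε + 2Mt` lies in `[ε, (1 + 2M)ε]`, and for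
`t ≥ ε` it lies in `[2Mt, (1 + 2M)t]`. For `s ∈ [a, b]` the density `p_s(u)` is at most
`(2πa)^{-d/2} e^{-‖u‖²/(2b)} = (b/a)^{d/2} p_b(u)`, because its prefactor decreases and its
exponential factor increases in `s`. The first piece then carries the factor
`ε^{1-d/2} e^{-c/ε}`, which stays bounded on `(0, 1]` because `e^{-c/ε} ≤ d! (ε/c)^d`; the same
estimate shows that `s ↦ p_s(u)` is bounded near `s = 0`, hence integrable, when `u ≠ 0`.
-/

open MeasureTheory Real intervalIntegral
open scoped Nat

noncomputable section

/-- The `d`-dimensional centered Gaussian density with variance parameter `t`. -/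
def gaussDensD (d : ℕ) (t : ℝ) (x : EuclideanSpace ℝ (Fin d)) : ℝ :=
  (2 * π * t) ^ (-(d : ℝ) / 2) * Real.exp (-‖x‖ ^ 2 / (2 * t))

lemma exp_neg_div_le_factorial_mul_pow (n : ℕ) {c s : ℝ} (hc : 0 < c) (hs : 0 < s) :
    exp (-(c / s)) ≤ n ! * (s / c) ^ n := by
  have hpos : 0 < (c / s) ^ n / n ! := by positivity
  calc exp (-(c / s)) = (exp (c / s))⁻¹ := exp_neg _
    _ ≤ ((c / s) ^ n / n !)⁻¹ := inv_anti₀ hpos (pow_div_factorial_le_exp _ (by positivity) n)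
    _ = n ! * (s / c) ^ n := by rw [inv_div, div_pow, div_pow]; field_simp

lemma rpow_mul_exp_neg_div_le (n : ℕ) {c s : ℝ} (r : ℝ) (hc : 0 < c) (hs : 0 < s) :
    s ^ r * exp (-(c / s)) ≤ n ! / c ^ n * s ^ (r + n) := by
  calc s ^ r * exp (-(c / s)) ≤ s ^ r * (n ! * (s / c) ^ n) := by
        gcongr; exact exp_neg_div_le_factorial_mul_pow n hc hs
    _ = n ! / c ^ n * s ^ (r + n) := by
        rw [rpow_add hs, rpow_natCast, div_pow]; ring

lemma rpow_mul_exp_neg_div_le_of_le_one (n : ℕ) {c s r : ℝ} (hc : 0 < c) (hs : 0 < s)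
    (hs₁ : s ≤ 1) (hrn : 0 ≤ r + n) :
    s ^ r * exp (-(c / s)) ≤ n ! / c ^ n := by
  refine (rpow_mul_exp_neg_div_le n r hc hs).trans ?_
  exact mul_le_of_le_one_right (by positivity) (rpow_le_one hs.le hs₁ hrn)

variable {d : ℕ} {u : EuclideanSpace ℝ (Fin d)}

lemma gaussDensD_nonneg {s : ℝ} (hs : 0 ≤ s) : 0 ≤ gaussDensD d s u := by
  unfold gaussDensD; positivity

lemma gaussDensD_eq_rpow_mul_exp {s : ℝ} (hs : 0 ≤ s) :
    gaussDensD d s u =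
      (2 * π) ^ (-(d : ℝ) / 2) * (s ^ (-(d : ℝ) / 2) * exp (-((‖u‖ ^ 2 / 2) / s))) := by
  rw [gaussDensD, mul_rpow (by positivity) hs, mul_assoc, neg_div _ (‖u‖ ^ 2), div_div,
    mul_comm 2 s]

lemma gaussDensD_le_rpow (hu : u ≠ 0) {s : ℝ} (hs : 0 < s) :
    gaussDensD d s u ≤
      (2 * π) ^ (-(d : ℝ) / 2) * (d ! / (‖u‖ ^ 2 / 2) ^ d) * s ^ ((d : ℝ) / 2) := by
  have hc : 0 < ‖u‖ ^ 2 / 2 := by have := norm_pos_iff.mpr hu; positivity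
  rw [gaussDensD_eq_rpow_mul_exp hs.le, mul_assoc]
  refine mul_le_mul_of_nonneg_left ((rpow_mul_exp_neg_div_le d _ hc hs).trans_eq ?_)
    (by positivity)
  ring_nf

lemma continuousOn_gaussDensD : ContinuousOn (fun s => gaussDensD d s u) (Set.Ioi 0) := by
  intro s (hs : 0 < s)
  unfold gaussDensD
  apply ContinuousAt.continuousWithinAt
  exact ((continuousAt_rpow_const _ _ (Or.inl (by positivity))).comp (by fun_prop)).mul
    (by fun_prop (disch := positivity))

lemma intervalIntegrable_gaussDensD_comp {f : ℝ → ℝ} {a b : ℝ} (hf : Continuous f)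
    (hpos : ∀ t ∈ Set.uIcc a b, 0 < f t) :
    IntervalIntegrable (fun t => gaussDensD d (f t) u) volume a b :=
  (continuousOn_gaussDensD.comp hf.continuousOn hpos).intervalIntegrable

lemma intervalIntegrable_gaussDensD (hu : u ≠ 0) {T : ℝ} (hT : 0 ≤ T) :
    IntervalIntegrable (fun s => gaussDensD d s u) volume 0 T := by
  rw [intervalIntegrable_iff_integrableOn_Ioc_of_le hT]
  refine ⟨(continuousOn_gaussDensD.mono Set.Ioc_subset_Ioi_self).aestronglyMeasurable
    measurableSet_Ioc, HasFiniteIntegral.restrict_of_bounded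
    (C := (2 * π) ^ (-(d : ℝ) / 2) * (d ! / (‖u‖ ^ 2 / 2) ^ d) * T ^ ((d : ℝ) / 2))
    measure_Ioc_lt_top ?_⟩
  filter_upwards [ae_restrict_mem measurableSet_Ioc] with s ⟨hs, hsT⟩
  rw [norm_of_nonneg (gaussDensD_nonneg hs.le)]
  exact (gaussDensD_le_rpow hu hs).trans (by gcongr)

lemma gaussDensD_le_of_le_of_le {a s b : ℝ} (ha : 0 < a) (has : a ≤ s) (hsb : s ≤ b) :
    gaussDensD d s u ≤ (2 * π * a) ^ (-(d : ℝ) / 2) * exp (-‖u‖ ^ 2 / (2 * b)) := by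
  have hs : 0 < s := ha.trans_le has
  unfold gaussDensD
  gcongr ?_ * exp ?_
  · exact rpow_le_rpow_of_nonpos (by positivity) (by gcongr)
      (by rw [neg_div, neg_nonpos]; positivity)
  · rw [neg_div, neg_div, neg_le_neg_iff]; gcongr

lemma gaussDensD_le_div_rpow_mul_gaussDensD {a s b : ℝ} (ha : 0 < a) (has : a ≤ s)
    (hsb : s ≤ b) :
    gaussDensD d s u ≤ (b / a) ^ ((d : ℝ) / 2) * gaussDensD d b u := by
  have hb : 0 < b := ha.trans_le (has.trans hsb)
  refine (gaussDensD_le_of_le_of_le ha has hsb).trans_eq ?_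
  have hratio : (a / b) ^ (-(d : ℝ) / 2) = (b / a) ^ ((d : ℝ) / 2) := by
    rw [neg_div, rpow_neg (by positivity), ← inv_rpow (by positivity), inv_div]
  rw [gaussDensD, show 2 * π * a = 2 * π * b * (a / b) by field_simp,
    mul_rpow (by positivity) (by positivity), hratio]
  ring

lemma integral_gaussDensD_initial_le {ε M : ℝ} (hε : 0 < ε) (hM : 0 ≤ M) :
    ∫ t in (0 : ℝ)..ε, gaussDensD d (ε + 2 * M * t) u ≤
      (2 * π) ^ (-(d : ℝ) / 2) * ε ^ (1 - (d : ℝ) / 2) *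
        exp (-‖u‖ ^ 2 / (2 * (1 + 2 * M) * ε)) := by
  have hbound : ∀ t ∈ Set.Icc 0 ε, gaussDensD d (ε + 2 * M * t) u ≤
      (2 * π * ε) ^ (-(d : ℝ) / 2) * exp (-‖u‖ ^ 2 / (2 * (1 + 2 * M) * ε)) := by
    intro t ⟨ht₀, htε⟩
    rw [mul_assoc 2 (1 + 2 * M)]
    exact gaussDensD_le_of_le_of_le hε (by nlinarith) (by nlinarith)
  have hint : IntervalIntegrable (fun t => gaussDensD d (ε + 2 * M * t) u) volume 0 ε :=
    intervalIntegrable_gaussDensD_comp (by fun_prop) fun t ht => by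
      rw [Set.uIcc_of_le hε.le] at ht; nlinarith [ht.1]
  calc ∫ t in (0 : ℝ)..ε, gaussDensD d (ε + 2 * M * t) u
      ≤ ∫ _ in (0 : ℝ)..ε, (2 * π * ε) ^ (-(d : ℝ) / 2) *
          exp (-‖u‖ ^ 2 / (2 * (1 + 2 * M) * ε)) :=
        integral_mono_on hε.le hint intervalIntegrable_const hbound
    _ = ε * (2 * π * ε) ^ (-(d : ℝ) / 2) * exp (-‖u‖ ^ 2 / (2 * (1 + 2 * M) * ε)) := by
        simp only [intervalIntegral.integral_const, sub_zero, smul_eq_mul, mul_assoc]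
    _ = _ := by
        rw [mul_rpow (by positivity) hε.le, sub_eq_add_neg, rpow_add hε, rpow_one, ← neg_div]
        ring

lemma integral_gaussDensD_tail_le (hu : u ≠ 0) {ε M : ℝ} (hε : 0 < ε) (hε₁ : ε ≤ 1)
    (hM : 0 < M) :
    ∫ t in ε..1, gaussDensD d (ε + 2 * M * t) u ≤
      ((1 + 2 * M) / (2 * M)) ^ ((d : ℝ) / 2) *
        ∫ t in (0 : ℝ)..1, gaussDensD d ((1 + 2 * M) * t) u := by
  have hpos : ∀ t ∈ Set.uIcc ε 1, 0 < t := fun t ht => by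
    rw [Set.uIcc_of_le hε₁] at ht; exact hε.trans_le ht.1
  have hbound : ∀ t ∈ Set.Icc ε 1, gaussDensD d (ε + 2 * M * t) u ≤
      ((1 + 2 * M) / (2 * M)) ^ ((d : ℝ) / 2) * gaussDensD d ((1 + 2 * M) * t) u := by
    intro t ⟨hεt, ht₁⟩
    have ht : 0 < t := hε.trans_le hεt
    rw [← mul_div_mul_right (1 + 2 * M) (2 * M) ht.ne']
    exact gaussDensD_le_div_rpow_mul_gaussDensD (by positivity) (by linarith) (by nlinarith)
  have hint₀₁ : IntervalIntegrable (fun t => gaussDensD d ((1 + 2 * M) * t) u) volume 0 1 := by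
    have hc : (1 + 2 * M) ≠ 0 := by positivity
    simpa [hc] using
      (intervalIntegrable_gaussDensD hu (T := 1 + 2 * M) (by positivity)).comp_mul_left
        (c := 1 + 2 * M)
  have hintF : IntervalIntegrable (fun t => gaussDensD d (ε + 2 * M * t) u) volume ε 1 :=
    intervalIntegrable_gaussDensD_comp (by fun_prop) fun t ht => by nlinarith [hpos t ht]
  have hintG : IntervalIntegrable (fun t => gaussDensD d ((1 + 2 * M) * t) u) volume ε 1 :=
    intervalIntegrable_gaussDensD_comp (by fun_prop) fun t ht => by nlinarith [hpos t ht]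
  calc ∫ t in ε..1, gaussDensD d (ε + 2 * M * t) u
      ≤ ∫ t in ε..1,
          ((1 + 2 * M) / (2 * M)) ^ ((d : ℝ) / 2) * gaussDensD d ((1 + 2 * M) * t) u :=
        integral_mono_on hε₁ hintF (hintG.const_mul _) hbound
    _ = ((1 + 2 * M) / (2 * M)) ^ ((d : ℝ) / 2) *
          ∫ t in ε..1, gaussDensD d ((1 + 2 * M) * t) u :=
        integral_const_mul _ _
    _ ≤ _ := by
        gcongr
        refine integral_mono_interval hε.le hε₁ le_rfl ?_ hint₀₁
        filter_upwards [ae_restrict_mem measurableSet_Ioc] with t ht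
        exact gaussDensD_nonneg (by nlinarith [ht.1])

theorem gaussian_time_integral_uniform_bound_general
    (d : ℕ) (M : ℝ) (hM : 0 < M)
    (u : EuclideanSpace ℝ (Fin d)) (hu : u ≠ 0) :
    (∀ ε : ℝ, 0 < ε → ε ≤ 1 →
      ∫ t in (0 : ℝ)..1, gaussDensD d (ε + 2 * M * t) u ≤
        (2 * π) ^ (-(d : ℝ) / 2) * ε ^ (1 - (d : ℝ) / 2) *
            Real.exp (-‖u‖ ^ 2 / (2 * (1 + 2 * M) * ε)) +
          ((1 + 2 * M) / (2 * M)) ^ ((d : ℝ) / 2) *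
            ∫ t in (0 : ℝ)..1, gaussDensD d ((1 + 2 * M) * t) u) ∧
    ∃ κ : ℝ, ∀ ε : ℝ, 0 < ε → ε ≤ 1 →
      ((2 * π) ^ (-(d : ℝ) / 2) * ε ^ (1 - (d : ℝ) / 2) *
            Real.exp (-‖u‖ ^ 2 / (2 * (1 + 2 * M) * ε)) +
          ((1 + 2 * M) / (2 * M)) ^ ((d : ℝ) / 2) *
            ∫ t in (0 : ℝ)..1, gaussDensD d ((1 + 2 * M) * t) u) ≤ κ := by
  set c := ‖u‖ ^ 2 / (2 * (1 + 2 * M))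
  have hc : 0 < c := by have := norm_pos_iff.mpr hu; positivity
  refine ⟨fun ε hε hε₁ => ?_, ⟨(2 * π) ^ (-(d : ℝ) / 2) * (d ! / c ^ d) +
    ((1 + 2 * M) / (2 * M)) ^ ((d : ℝ) / 2) *
      ∫ t in (0 : ℝ)..1, gaussDensD d ((1 + 2 * M) * t) u, fun ε hε hε₁ => ?_⟩⟩
  · have hint : ∀ a b, 0 ≤ a → 0 ≤ b →
        IntervalIntegrable (fun t => gaussDensD d (ε + 2 * M * t) u) volume a b :=
      fun a b ha hb => intervalIntegrable_gaussDensD_comp (by fun_prop) fun t ht => by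
        have : 0 ≤ t := (le_min ha hb).trans ht.1
        positivity
    rw [← integral_add_adjacent_intervals (hint 0 ε le_rfl hε.le) (hint ε 1 hε.le zero_le_one)]
    exact add_le_add (integral_gaussDensD_initial_le hε hM.le)
      (integral_gaussDensD_tail_le hu hε hε₁ hM)
  · have hexp : -‖u‖ ^ 2 / (2 * (1 + 2 * M) * ε) = -(c / ε) := by
      simp only [c]; field_simp
    rw [hexp, mul_assoc _ (ε ^ _)]
    gcongr
    exact rpow_mul_exp_neg_div_le_of_le_one d hc hε hε₁ (by ring_nf; positivity)

/-- for `d ≥ 1`, `M > 0` and `u ≠ 0`, the integrals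
`∫₀¹ p^d_{ε+2Mt}(u) dt` are bounded uniformly in `ε ∈ (0,1]`, with the explicit bound
stated in the paper. -/
theorem gaussian_time_integral_uniform_bound
    (d : ℕ) (hd : 1 ≤ d) (M : ℝ) (hM : 0 < M)
    (u : EuclideanSpace ℝ (Fin d)) (hu : u ≠ 0) :
    (∀ ε : ℝ, 0 < ε → ε ≤ 1 →
      ∫ t in (0 : ℝ)..1, gaussDensD d (ε + 2 * M * t) u ≤
        (2 * π) ^ (-(d : ℝ) / 2) * ε ^ (1 - (d : ℝ) / 2) *
            Real.exp (-‖u‖ ^ 2 / (2 * (1 + 2 * M) * ε)) +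
          ((1 + 2 * M) / (2 * M)) ^ ((d : ℝ) / 2) *
            ∫ t in (0 : ℝ)..1, gaussDensD d ((1 + 2 * M) * t) u) ∧
    ∃ κ : ℝ, ∀ ε : ℝ, 0 < ε → ε ≤ 1 →
      ((2 * π) ^ (-(d : ℝ) / 2) * ε ^ (1 - (d : ℝ) / 2) *
            Real.exp (-‖u‖ ^ 2 / (2 * (1 + 2 * M) * ε)) +
          ((1 + 2 * M) / (2 * M)) ^ ((d : ℝ) / 2) *
            ∫ t in (0 : ℝ)..1, gaussDensD d ((1 + 2 * M) * t) u) ≤ κ :=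
  gaussian_time_integral_uniform_bound_general d M hM u hu
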